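/- (Hardy, classical ingredient) Let h be an entire function on C^m such that |h(z)| ≤ C e^{‖z‖²/2} for all z ∈ C^m and |h(y)| ≤ C e^{-‖y‖²/2} for all y ∈ R^m. Then h(z) = A e^{-z²/2} for some constant A (where z² = Σ z_j² for z ∈ C^m). -/

import Mathlib

/-!
In one variable, `ψ z = φ z * exp (z² / 2)` satisfies `‖ψ z‖ ≤ C * exp ((re z)²)` and `‖ψ‖ ≤ C`
on both axes. Order two is one too many for Phragmén–Lindelöf in a quadrant, but in a sector
`0 ≤ arg z ≤ b < π / 2` the weight `exp (i ε z²)` with `ε = cot b / 2` has modulus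
`exp (-2 ε x y)`, which cancels `exp (x²)` on the ray `arg z = b`. This gives
`‖ψ z‖ ≤ C * exp (x y cot b)`, and letting `b → π / 2` bounds `ψ` by `C` in every quadrant, so
`ψ` is constant by Liouville. In `m` variables, restricting `h` to real lines through the origin
gives `h y = h 0 * exp (-‖y‖² / 2)` on `ℝ^m`, and two entire functions agreeing on `ℝ^m` agree
everywhere because `w ↦ f (x + w • y)` is entire in one variable for real `x`, `y`.
-/

open Complex ComplexConjugate Set Filter Topology

theorem PhragmenLindelof.sector {E : Type*} [NormedAddCommGroup E] [NormedSpace ℂ E]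
    {f : ℂ → E} (hf : Differentiable ℂ f) {b c A B C : ℝ} (hc₀ : 0 ≤ c) (hc : c < Real.pi / b)
    (hgrowth : ∀ z, ‖f z‖ ≤ A * Real.exp (B * ‖z‖ ^ c))
    (hreal : ∀ x : ℝ, 0 ≤ x → ‖f x‖ ≤ C)
    (hray : ∀ r : ℝ, 0 ≤ r → ‖f (r * exp (b * I))‖ ≤ C)
    {z : ℂ} (hz₀ : 0 ≤ arg z) (hzb : arg z ≤ b) : ‖f z‖ ≤ C := by
  rcases eq_or_ne z 0 with rfl | hz
  · simpa using hreal 0 le_rfl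
  rw [← exp_log hz]
  refine PhragmenLindelof.horizontal_strip (f := f ∘ exp) (a := 0) (b := b)
    (hf.comp differentiable_exp).diffContOnCl ⟨c, by rwa [sub_zero], max B 0, ?_⟩
    (fun w hw => ?_) (fun w hw => ?_) (by rwa [log_im]) (by rwa [log_im])
  · refine .of_bound |A| (.of_forall fun w => ?_)
    have hexp : Real.exp (c * w.re) ≤ Real.exp (c * |w.re|) := by
      gcongr; exact le_abs_self _
    calc ‖f (exp w)‖ ≤ A * Real.exp (B * Real.exp (c * w.re)) := by
          simpa [norm_exp, ← Real.exp_mul, mul_comm] using hgrowth (exp w)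
      _ ≤ |A| * ‖Real.exp (max B 0 * Real.exp (c * |w.re|))‖ := by
          rw [Real.norm_of_nonneg (Real.exp_pos _).le]
          gcongr ?_ * Real.exp ?_
          · exact le_abs_self A
          · calc B * Real.exp (c * w.re) ≤ max B 0 * Real.exp (c * w.re) := by
                  gcongr; exact le_max_left _ _
              _ ≤ max B 0 * Real.exp (c * |w.re|) := by gcongr
  · have : exp w = (Real.exp w.re : ℂ) := by
      conv_lhs => rw [← re_add_im w, hw]
      simp [ofReal_exp]
    simpa [this] using hreal _ (Real.exp_pos _).le
  · have : exp w = (Real.exp w.re : ℂ) * exp (b * I) := by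
      rw [ofReal_exp, ← exp_add, ← hw, re_add_im]
    simpa [this] using hray _ (Real.exp_pos _).le

theorem norm_le_mul_exp_of_arg_mem_Icc {E : Type*} [NormedAddCommGroup E] [NormedSpace ℂ E]
    {ψ : ℂ → E} (hψ : Differentiable ℂ ψ) {C : ℝ}
    (hgrowth : ∀ z, ‖ψ z‖ ≤ C * Real.exp (z.re ^ 2))
    (hreal : ∀ x : ℝ, 0 ≤ x → ‖ψ x‖ ≤ C) {b : ℝ} (hb₀ : 0 < b) (hb : b < Real.pi / 2)
    {z : ℂ} (hz₀ : 0 ≤ arg z) (hzb : arg z ≤ b) :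
    ‖ψ z‖ ≤ C * Real.exp (z.re * z.im * (Real.cos b / Real.sin b)) := by
  have hC : 0 ≤ C := (norm_nonneg _).trans (hreal 0 le_rfl)
  have hsin : 0 < Real.sin b := Real.sin_pos_of_pos_of_lt_pi hb₀ (by linarith [Real.pi_pos])
  have hcos : 0 < Real.cos b := Real.cos_pos_of_mem_Ioo ⟨by linarith, hb⟩
  set ε := Real.cos b / (2 * Real.sin b)
  have hε : 0 < ε := by positivity
  have hweight : ∀ w : ℂ, ‖exp (ε * I * w ^ 2)‖ = Real.exp (-(2 * ε * (w.re * w.im))) := by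
    intro w
    rw [norm_exp]
    congr 1
    simp [sq]
    ring
  set F : ℂ → E := fun w => exp (ε * I * w ^ 2) • ψ w
  have hF : ∀ w, ‖F w‖ ≤ C * Real.exp (w.re ^ 2 - 2 * ε * (w.re * w.im)) := by
    intro w
    calc ‖F w‖ = Real.exp (-(2 * ε * (w.re * w.im))) * ‖ψ w‖ := by rw [norm_smul, hweight]
      _ ≤ Real.exp (-(2 * ε * (w.re * w.im))) * (C * Real.exp (w.re ^ 2)) := by
          gcongr; exact hgrowth w
      _ = C * Real.exp (w.re ^ 2 - 2 * ε * (w.re * w.im)) := by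
          rw [sub_eq_add_neg, Real.exp_add]; ring
  have hFz : ‖F z‖ ≤ C := by
    refine PhragmenLindelof.sector (f := F) (Differentiable.smul (by fun_prop) hψ) (c := 2)
      (A := C) (B := 1 + ε) zero_le_two ?_ (fun w => ?_) (fun x hx => ?_) (fun r hr => ?_) hz₀ hzb
    · rw [lt_div_iff₀ hb₀]; linarith
    · refine (hF w).trans ?_
      rw [Real.rpow_two, Complex.sq_norm, normSq_apply]
      gcongr
      nlinarith [sq_nonneg (w.re + w.im), sq_nonneg w.im]
    · simpa [F, norm_smul, hweight] using hreal x hx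
    · refine (hF _).trans_eq ?_
      have hcancel : (r * exp (b * I)).re ^ 2
          - 2 * ε * ((r * exp (b * I)).re * (r * exp (b * I)).im) = 0 := by
        simp only [re_ofReal_mul, im_ofReal_mul, exp_ofReal_mul_I_re, exp_ofReal_mul_I_im, ε]
        field_simp
        ring
      rw [hcancel, Real.exp_zero, mul_one]
  calc ‖ψ z‖ = Real.exp (2 * ε * (z.re * z.im)) * ‖F z‖ := by
        rw [norm_smul, hweight, ← mul_assoc, ← Real.exp_add, add_neg_cancel, Real.exp_zero,
          one_mul]
    _ ≤ Real.exp (2 * ε * (z.re * z.im)) * C := by gcongr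
    _ = C * Real.exp (z.re * z.im * (Real.cos b / Real.sin b)) := by
        rw [mul_comm]
        congr 2
        simp only [ε]
        field_simp

theorem norm_le_of_quadrant_I {E : Type*} [NormedAddCommGroup E] [NormedSpace ℂ E]
    {ψ : ℂ → E} (hψ : Differentiable ℂ ψ) {C : ℝ}
    (hgrowth : ∀ z, ‖ψ z‖ ≤ C * Real.exp (z.re ^ 2))
    (hreal : ∀ x : ℝ, 0 ≤ x → ‖ψ x‖ ≤ C) {z : ℂ} (hre : 0 ≤ z.re) (him : 0 ≤ z.im) :
    ‖ψ z‖ ≤ C := by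
  rcases hre.eq_or_lt with hre | hre
  · simpa [← hre] using hgrowth z
  have harg : max (arg z) 0 < Real.pi / 2 :=
    max_lt (arg_lt_pi_div_two_iff.2 (Or.inl hre)) (by positivity)
  have hlim : Tendsto (fun b => C * Real.exp (z.re * z.im * (Real.cos b / Real.sin b)))
      (𝓝[<] (Real.pi / 2)) (𝓝 C) := by
    have : ContinuousAt (fun b => C * Real.exp (z.re * z.im * (Real.cos b / Real.sin b)))
        (Real.pi / 2) := by
      fun_prop (disch := simp)
    simpa using this.tendsto.mono_left nhdsWithin_le_nhds
  refine ge_of_tendsto hlim ?_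
  filter_upwards [Ioo_mem_nhdsLT harg] with b hb
  exact norm_le_mul_exp_of_arg_mem_Icc hψ hgrowth hreal ((le_max_right _ _).trans_lt hb.1) hb.2
    (arg_nonneg_iff.2 him) ((le_max_left _ _).trans hb.1.le)

theorem norm_le_of_norm_le_mul_exp_re_sq {ψ : ℂ → ℂ} (hψ : Differentiable ℂ ψ) {C : ℝ}
    (hgrowth : ∀ z, ‖ψ z‖ ≤ C * Real.exp (z.re ^ 2)) (hreal : ∀ x : ℝ, ‖ψ x‖ ≤ C) (z : ℂ) :
    ‖ψ z‖ ≤ C := by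
  -- the hypotheses are invariant under `ψ ↦ conj ∘ ψ ∘ conj` and `ψ ↦ ψ ∘ neg`
  have right_half : ∀ φ : ℂ → ℂ, Differentiable ℂ φ → (∀ z, ‖φ z‖ ≤ C * Real.exp (z.re ^ 2)) →
      (∀ x : ℝ, ‖φ x‖ ≤ C) → ∀ z : ℂ, 0 ≤ z.re → ‖φ z‖ ≤ C := by
    intro φ hφ hgrowth hreal z hre
    rcases le_total 0 z.im with him | him
    · exact norm_le_of_quadrant_I hφ hgrowth (fun x _ => hreal x) hre him
    · simpa using norm_le_of_quadrant_I (ψ := conj ∘ φ ∘ conj)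
        (fun w => differentiableAt_conj_conj_iff.2 (hφ _))
        (fun w => by simpa [conj_re] using hgrowth (conj w))
        (fun x _ => by simpa using hreal x) (z := conj z) (by simpa) (by simpa)
  rcases le_total 0 z.re with hre | hre
  · exact right_half ψ hψ hgrowth hreal z hre
  · simpa using right_half (fun w => ψ (-w)) (hψ.comp differentiable_neg)
      (fun w => by simpa using hgrowth (-w)) (fun x => by simpa using hreal (-x)) (-z)
      (by simpa)

theorem eq_of_eq_on_real {F : Type*} [NormedAddCommGroup F] [NormedSpace ℂ F] [CompleteSpace F]
    {f g : ℂ → F} (hf : Differentiable ℂ f) (hg : Differentiable ℂ g)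
    (hfg : ∀ x : ℝ, f x = g x) : f = g := by
  have hreal : Tendsto ofReal (𝓝[≠] 0) (𝓝[≠] 0) :=
    continuous_ofReal.continuousWithinAt.tendsto_nhdsWithin fun x hx => by simpa using hx
  funext z
  exact (analyticOnNhd_univ_iff_differentiable.2 hf).eqOn_of_preconnected_of_frequently_eq
    (analyticOnNhd_univ_iff_differentiable.2 hg)
    isPreconnected_univ (mem_univ 0) (hreal.frequently (.of_forall hfg)) (mem_univ z)

theorem eq_mul_exp_neg_sq_div_two {φ : ℂ → ℂ} (hφ : Differentiable ℂ φ) {C : ℝ}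
    (hbound : ∀ z, ‖φ z‖ ≤ C * Real.exp (‖z‖ ^ 2 / 2))
    (hreal : ∀ x : ℝ, ‖φ x‖ ≤ C * Real.exp (-x ^ 2 / 2)) (z : ℂ) :
    φ z = φ 0 * exp (-z ^ 2 / 2) := by
  set ψ : ℂ → ℂ := fun w => φ w * exp (w ^ 2 / 2)
  have hψ : Differentiable ℂ ψ := hφ.mul (by fun_prop)
  have hnorm : ∀ w : ℂ, ‖ψ w‖ = ‖φ w‖ * Real.exp ((w.re ^ 2 - w.im ^ 2) / 2) := by
    intro w
    simp only [ψ, norm_mul, norm_exp]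
    congr 2
    simp [sq]
  have hψ_le : ∀ w, ‖ψ w‖ ≤ C := by
    refine norm_le_of_norm_le_mul_exp_re_sq hψ (fun w => ?_) (fun x => ?_)
    · rw [hnorm]
      calc ‖φ w‖ * Real.exp ((w.re ^ 2 - w.im ^ 2) / 2)
          ≤ C * Real.exp (‖w‖ ^ 2 / 2) * Real.exp ((w.re ^ 2 - w.im ^ 2) / 2) := by
            gcongr; exact hbound w
        _ = C * Real.exp (w.re ^ 2) := by
            rw [mul_assoc, ← Real.exp_add, Complex.sq_norm, normSq_apply]; ring_nf
    · rw [hnorm, ofReal_re, ofReal_im]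
      calc ‖φ x‖ * Real.exp ((x ^ 2 - 0 ^ 2) / 2)
          ≤ C * Real.exp (-x ^ 2 / 2) * Real.exp ((x ^ 2 - 0 ^ 2) / 2) := by
            gcongr; exact hreal x
        _ = C := by rw [mul_assoc, ← Real.exp_add]; ring_nf; simp
  have hconst : ψ z = ψ 0 := hψ.apply_eq_apply_of_bounded
    (isBounded_iff_forall_norm_le.2 ⟨C, by rintro _ ⟨w, rfl⟩; exact hψ_le w⟩) z 0
  calc φ z = ψ z * exp (-z ^ 2 / 2) := by
        rw [mul_assoc, ← exp_add]; ring_nf; simp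
    _ = φ 0 * exp (-z ^ 2 / 2) := by rw [hconst]; simp [ψ]

namespace EuclideanSpace

variable {ι : Type*}

def complexify (y : EuclideanSpace ℝ ι) : EuclideanSpace ℂ ι :=
  WithLp.toLp 2 fun i => (y i : ℂ)

@[simp]
theorem complexify_apply (y : EuclideanSpace ℝ ι) (i : ι) : complexify y i = y i := rfl

@[simp]
theorem complexify_zero : complexify (0 : EuclideanSpace ℝ ι) = 0 := by
  ext; simp

theorem complexify_add (x y : EuclideanSpace ℝ ι) :
    complexify (x + y) = complexify x + complexify y := by
  ext; simp

theorem complexify_smul (t : ℝ) (y : EuclideanSpace ℝ ι) :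
    complexify (t • y) = (t : ℂ) • complexify y := by
  ext; simp

@[simp]
theorem norm_complexify [Fintype ι] (y : EuclideanSpace ℝ ι) : ‖complexify y‖ = ‖y‖ := by
  simp [EuclideanSpace.norm_eq]

theorem sum_complexify_sq [Fintype ι] (y : EuclideanSpace ℝ ι) :
    ∑ i, complexify y i ^ 2 = ((‖y‖ ^ 2 : ℝ) : ℂ) := by
  simp [EuclideanSpace.real_norm_sq_eq]

theorem eq_of_eq_complexify [Fintype ι] {F : Type*} [NormedAddCommGroup F] [NormedSpace ℂ F]
    [CompleteSpace F] {f g : EuclideanSpace ℂ ι → F} (hf : Differentiable ℂ f)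
    (hg : Differentiable ℂ g) (hfg : ∀ y, f (complexify y) = g (complexify y)) : f = g := by
  funext z
  set x : EuclideanSpace ℝ ι := WithLp.toLp 2 fun i => (z i).re
  set y : EuclideanSpace ℝ ι := WithLp.toLp 2 fun i => (z i).im
  have hline : ∀ t : ℝ, complexify x + (t : ℂ) • complexify y = complexify (x + t • y) := by
    intro t; rw [complexify_add, complexify_smul]
  have hz : complexify x + I • complexify y = z := by
    ext i; simp [x, y, mul_comm I, re_add_im]
  have hline_eq := eq_of_eq_on_real (f := fun w : ℂ => f (complexify x + w • complexify y))
    (g := fun w : ℂ => g (complexify x + w • complexify y))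
    (hf.comp ((differentiable_id.smul_const _).const_add _))
    (hg.comp ((differentiable_id.smul_const _).const_add _))
    (fun t => by simpa only [hline] using hfg (x + t • y))
  simpa [hz] using congrFun hline_eq I

end EuclideanSpace

open EuclideanSpace in
theorem apply_complexify_eq_mul_exp {ι : Type*} [Fintype ι] {h : EuclideanSpace ℂ ι → ℂ}
    (hh : Differentiable ℂ h) {C : ℝ} (hbound : ∀ z, ‖h z‖ ≤ C * Real.exp (‖z‖ ^ 2 / 2))
    (hreal : ∀ y, ‖h (complexify y)‖ ≤ C * Real.exp (-‖y‖ ^ 2 / 2)) (y : EuclideanSpace ℝ ι) :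
    h (complexify y) = h 0 * exp (-((‖y‖ ^ 2 : ℝ) : ℂ) / 2) := by
  rcases eq_or_ne y 0 with rfl | hy
  · simp
  set u := ‖y‖⁻¹ • y
  have hu : ‖u‖ = 1 := norm_smul_inv_norm hy
  have hline := eq_mul_exp_neg_sq_div_two (φ := fun w : ℂ => h (w • complexify u))
    (hh.comp (differentiable_id.smul_const _))
    (fun w => by simpa [norm_smul, hu] using hbound (w • complexify u))
    (fun t => by simpa [complexify_smul, norm_smul, hu] using hreal (t • u)) ‖y‖
  rw [← complexify_smul, smul_inv_smul₀ (norm_ne_zero_iff.2 hy)] at hline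
  simpa using hline

theorem hardy_entire_lemma_general (m : ℕ)
    (h : EuclideanSpace ℂ (Fin m) → ℂ) (hh : Differentiable ℂ h)
    (C : ℝ)
    (hbound : ∀ z, ‖h z‖ ≤ C * Real.exp (‖z‖ ^ 2 / 2))
    (hreal : ∀ y : EuclideanSpace ℝ (Fin m),
      ‖h (WithLp.toLp 2 (fun i => (y i : ℂ)))‖ ≤ C * Real.exp (-‖y‖ ^ 2 / 2)) :
    ∃ A : ℂ, ∀ z, h z = A * Complex.exp (-(∑ j, z j ^ 2) / 2) := by
  have hgauss : Differentiable ℂ fun z : EuclideanSpace ℂ (Fin m) =>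
      h 0 * exp (-(∑ j, z j ^ 2) / 2) := by
    fun_prop
  refine ⟨h 0, fun z => congrFun (EuclideanSpace.eq_of_eq_complexify hh hgauss fun y => ?_) z⟩
  rw [apply_complexify_eq_mul_exp hh hbound hreal y, EuclideanSpace.sum_complexify_sq]

/-- Complex-analytic lemma behind the equality case of Hardy's theorem: if `h` is entire on
`ℂ^m` with `|h(z)| ≤ C e^{‖z‖²/2}` everywhere and `|h(y)| ≤ C e^{-‖y‖²/2}` on `ℝ^m`,
then `h(z) = A e^{-z²/2}` for some constant `A`, where `z² = ∑ z_j²`. -/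
theorem hardy_entire_lemma (m : ℕ)
    (h : EuclideanSpace ℂ (Fin m) → ℂ) (hh : Differentiable ℂ h)
    (C : ℝ) (hC : 0 < C)
    (hbound : ∀ z, ‖h z‖ ≤ C * Real.exp (‖z‖ ^ 2 / 2))
    (hreal : ∀ y : EuclideanSpace ℝ (Fin m),
      ‖h (WithLp.toLp 2 (fun i => (y i : ℂ)))‖ ≤ C * Real.exp (-‖y‖ ^ 2 / 2)) :
    ∃ A : ℂ, ∀ z, h z = A * Complex.exp (-(∑ j, z j ^ 2) / 2) :=
  hardy_entire_lemma_general m h hh C hbound hreal
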